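/- arXiv:2604.25334 — 2 statements merged into one kernel-verified Lean document; each statement's English description precedes it below -/
import Mathlib

section
/- Let S_1, ..., S_{n+1} be exchangeable real-valued random variables that are almost surely distinct. For δ ∈ (0,1), let k = ⌈(1-δ)(n+1)⌉ and suppose k ≤ n; let τ = S_{(k)} be the k-th order statistic of S_1, ..., S_n. Then P(S_{n+1} ≤ τ) ≥ 1 - δ. -/
open MeasureTheory
open scoped ENNReal

/-- The `k`-th order statistic (1-indexed) of the values `f 0, ..., f (n-1)`. -/
noncomputable def orderStat (n : ℕ) (f : Fin n → ℝ) (k : ℕ) : ℝ :=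
  (Multiset.sort (↑(List.ofFn f) : Multiset ℝ) (· ≤ ·)).getD (k - 1) 0

lemma le_sorted_getElem_iff (l : List ℝ) (hsort : l.Pairwise (· ≤ ·)) (m : ℕ) (hm : m < l.length) (x : ℝ) :
    x ≤ l[m] ↔ l.countP (fun a => decide (a < x)) ≤ m := by
  constructor
  · intro hx
    have hsplit : l.countP (fun a => decide (a < x)) =
        (l.take m).countP (fun a => decide (a < x)) + (l.drop m).countP (fun a => decide (a < x)) := by
      conv_lhs => rw [← List.take_append_drop m l]
      rw [List.countP_append]
    have hdrop : (l.drop m).countP (fun a => decide (a < x)) = 0 := by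
      rw [List.countP_eq_zero]
      intro a ha
      obtain ⟨j, hj, rfl⟩ := List.mem_iff_getElem.mp ha
      have hmj : m + j < l.length := by
        have := hj; rw [List.length_drop] at this; omega
      rw [List.getElem_drop]
      have hle : l[m] ≤ l[m + j] := by
        have := hsort.rel_get_of_le (a := ⟨m, hm⟩) (b := ⟨m + j, hmj⟩) (by simp)
        simpa using this
      simp only [decide_eq_true_eq]
      push_neg
      linarith
    have htake : (l.take m).countP (fun a => decide (a < x)) ≤ m := by
      calc (l.take m).countP (fun a => decide (a < x)) ≤ (l.take m).length := List.countP_le_length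
        _ ≤ m := by simp
    omega
  · intro hc
    by_contra hx
    push_neg at hx
    have htake : (l.take (m+1)).countP (fun a => decide (a < x)) = m + 1 := by
      have hall : (l.take (m+1)).countP (fun a => decide (a < x)) = (l.take (m+1)).length := by
        rw [List.countP_eq_length]
        intro a ha
        obtain ⟨j, hj, rfl⟩ := List.mem_iff_getElem.mp ha
        have hjm : j ≤ m := by
          have := hj; rw [List.length_take] at this; omega
        rw [List.getElem_take]
        have hle : l[j]'(by omega) ≤ l[m] := by
          have := hsort.rel_get_of_le (a := ⟨j, by omega⟩) (b := ⟨m, hm⟩) (by simpa)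
          simpa using this
        simp only [decide_eq_true_eq]
        linarith
      rw [hall, List.length_take]
      omega
    have hsub : (l.take (m+1)).countP (fun a => decide (a < x)) ≤ l.countP (fun a => decide (a < x)) :=
      (List.take_sublist _ _).countP_le
    omega

lemma le_orderStat_iff (n : ℕ) (f : Fin n → ℝ) (k : ℕ) (hk1 : 1 ≤ k) (hkn : k ≤ n) (x : ℝ) :
    x ≤ orderStat n f k ↔
      (Finset.univ.filter (fun i => f i < x)).card ≤ k - 1 := by
  classical
  set l := Multiset.sort (↑(List.ofFn f) : Multiset ℝ) (· ≤ ·) with hldef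
  have hlen : l.length = n := by simp [hldef]
  have hsort : l.Pairwise (· ≤ ·) := Multiset.pairwise_sort _ _
  have hm : k - 1 < l.length := by omega
  have hgetD : orderStat n f k = l[k-1] := by
    rw [orderStat, ← hldef, List.getD_eq_getElem l 0 hm]
  have hcount : (Finset.univ.filter (fun i => f i < x)).card = l.countP (fun a => decide (a < x)) := by
    have hl : (↑l : Multiset ℝ) = ↑(List.ofFn f) := Multiset.sort_eq _ _
    have h1 : l.countP (fun a => decide (a < x)) = (List.ofFn f).countP (fun a => decide (a < x)) := by
      have h2 : (↑l : Multiset ℝ).countP (fun a => a < x) = (↑(List.ofFn f) : Multiset ℝ).countP (fun a => a < x) := by rw [hl]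
      simpa using h2
    rw [h1, List.ofFn_eq_map, List.countP_map, List.countP_eq_length_filter]
    rw [Fin.univ_def]
    have : ((fun a => decide (a < x)) ∘ f) = fun b => decide (f b < x) := rfl
    rw [this]
    simp [Finset.filter, Multiset.filter_coe, Function.comp]
  rw [hgetD, hcount]
  exact le_sorted_getElem_iff l hsort (k-1) hm x

lemma card_rank_le (n k : ℕ) (f : Fin (n+1) → ℝ) (hf : Function.Injective f)
    (hk1 : 1 ≤ k) (hkn : k ≤ n) :
    (Finset.univ.filter (fun j =>
      (Finset.univ.filter (fun i => f i < f j)).card ≤ k - 1)).card = k := by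
  classical
  have hbound : ∀ j : Fin (n+1), (Finset.univ.filter (fun i => f i < f j)).card < n + 1 := by
    intro j
    have hsub : Finset.univ.filter (fun i => f i < f j) ⊆ Finset.univ.erase j := by
      intro i hi
      simp only [Finset.mem_filter] at hi
      refine Finset.mem_erase.mpr ⟨?_, Finset.mem_univ _⟩
      rintro rfl; exact lt_irrefl _ hi.2
    calc (Finset.univ.filter (fun i => f i < f j)).card ≤ (Finset.univ.erase j).card :=
          Finset.card_le_card hsub
      _ = n := by simp
      _ < n + 1 := by omega
  set r : Fin (n+1) → Fin (n+1) := fun j => ⟨(Finset.univ.filter (fun i => f i < f j)).card, hbound j⟩ with hr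
  have hmono : ∀ j j' : Fin (n+1), f j < f j' → (r j : ℕ) < (r j' : ℕ) := by
    intro j j' hlt
    show (Finset.univ.filter (fun i => f i < f j)).card < (Finset.univ.filter (fun i => f i < f j')).card
    apply Finset.card_lt_card
    constructor
    · intro i hi
      simp only [Finset.mem_filter] at hi ⊢
      exact ⟨hi.1, hi.2.trans hlt⟩
    · intro hsub
      have : j ∈ Finset.univ.filter (fun i => f i < f j') := by simp [hlt]
      have := hsub this
      simp at this
  have hinj : Function.Injective r := by
    intro j j' h
    by_contra hne
    rcases lt_trichotomy (f j) (f j') with h1 | h1 | h1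
    · have := hmono _ _ h1; rw [h] at this; omega
    · exact hne (hf h1)
    · have := hmono _ _ h1; rw [h] at this; omega
  have hbij : Function.Bijective r := (Finite.injective_iff_bijective).mp hinj
  have hcard : (Finset.univ.filter (fun j => ((r j : ℕ)) ≤ k - 1)).card =
      (Finset.univ.filter (fun m : Fin (n+1) => (m : ℕ) ≤ k - 1)).card := by
    apply Finset.card_bij (fun j _ => r j)
    · intro j hj
      simp only [Finset.mem_filter] at hj ⊢
      exact ⟨Finset.mem_univ _, hj.2⟩
    · intro j _ j' _ h
      exact hinj h
    · intro m hm
      obtain ⟨j, rfl⟩ := hbij.2 m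
      simp only [Finset.mem_filter] at hm
      exact ⟨j, by simp [hm.2], rfl⟩
  have hfin : (Finset.univ.filter (fun m : Fin (n+1) => (m : ℕ) ≤ k - 1)).card = k := by
    have : (Finset.univ.filter (fun m : Fin (n+1) => (m : ℕ) ≤ k - 1)) =
        Finset.univ.filter (fun m : Fin (n+1) => (m : ℕ) < k) := by
      apply Finset.filter_congr
      intro m _
      constructor <;> (intro h; omega)
    rw [this]
    have h2 : Finset.univ.filter (fun m : Fin (n+1) => (m : ℕ) < k) = Finset.Iio (⟨k, by omega⟩ : Fin (n+1)) := by
      ext m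
      simp [Fin.lt_def]
    rw [h2, Fin.card_Iio]
  exact hcard.trans hfin

lemma card_filter_fin_succ (n : ℕ) (p : Fin (n+1) → Prop) [DecidablePred p] (hp : ¬ p (Fin.last n)) :
    (Finset.univ.filter p).card = (Finset.univ.filter (fun i : Fin n => p i.castSucc)).card := by
  rw [Finset.card_filter, Finset.card_filter, Fin.sum_univ_castSucc]
  simp [hp]

/-- For exchangeable, almost surely distinct scores `S₁, ..., S_{n+1}`,
`δ ∈ (0,1)`, `k = ⌈(1-δ)(n+1)⌉ ≤ n` and `τ = S_{(k)}` the `k`-th order statistic of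
`S₁, ..., S_n`, one has `P(S_{n+1} ≤ τ) ≥ 1 - δ`. -/
theorem stmt_0 {Ω : Type*} [MeasurableSpace Ω] (P : Measure Ω) [IsProbabilityMeasure P]
    (n : ℕ) (S : Fin (n + 1) → Ω → ℝ) (hmeas : ∀ i, Measurable (S i))
    (hexch : ∀ π : Equiv.Perm (Fin (n + 1)),
      Measure.map (fun ω i => S (π i) ω) P = Measure.map (fun ω i => S i ω) P)
    (hdist : ∀ᵐ ω ∂P, ∀ i j : Fin (n + 1), i ≠ j → S i ω ≠ S j ω)
    (δ : ℝ) (hδ : δ ∈ Set.Ioo (0 : ℝ) 1)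
    (k : ℕ) (hk : k = ⌈(1 - δ) * (n + 1)⌉₊) (hkn : k ≤ n) :
    ENNReal.ofReal (1 - δ) ≤
      P {ω | S (Fin.last n) ω ≤ orderStat n (fun i => S i.castSucc ω) k} := by
  classical
  obtain ⟨hδ0, hδ1⟩ := hδ
  have hk1 : 1 ≤ k := by
    rw [hk]
    rw [Nat.one_le_ceil_iff]
    have h1 : (0:ℝ) < 1 - δ := by linarith
    positivity
  -- the "rank count" set in the product space
  set A : Set (Fin (n+1) → ℝ) :=
    {x | (Finset.univ.filter (fun i => x i < x (Fin.last n))).card ≤ k - 1} with hA_def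
  have hA : MeasurableSet A := by
    have hg : Measurable (fun x : Fin (n+1) → ℝ =>
        (Finset.univ.filter (fun i => x i < x (Fin.last n))).card) := by
      have : (fun x : Fin (n+1) → ℝ =>
          (Finset.univ.filter (fun i => x i < x (Fin.last n))).card) =
          fun x => ∑ i : Fin (n+1), if x i < x (Fin.last n) then 1 else 0 := by
        funext x
        rw [Finset.card_filter]
      rw [this]
      apply Finset.measurable_sum
      intro i _
      exact Measurable.ite (measurableSet_lt (measurable_pi_apply i) (measurable_pi_apply _))
        measurable_const measurable_const
    have hpre : A = (fun x : Fin (n+1) → ℝ =>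
        (Finset.univ.filter (fun i => x i < x (Fin.last n))).card) ⁻¹' (Set.Iic (k-1)) := rfl
    rw [hpre]
    exact hg (by trivial)
  -- the events E j
  set E : Fin (n+1) → Set Ω := fun j =>
    {ω | (Finset.univ.filter (fun i => S i ω < S j ω)).card ≤ k - 1} with hE_def
  have hE_pre : ∀ j : Fin (n+1),
      E j = (fun ω i => S ((Equiv.swap j (Fin.last n)) i) ω) ⁻¹' A := by
    intro j
    ext ω
    simp only [hE_def, hA_def, Set.mem_preimage, Set.mem_setOf_eq]
    have hπlast : (Equiv.swap j (Fin.last n)) (Fin.last n) = j := Equiv.swap_apply_right _ _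
    have hcardeq : (Finset.univ.filter (fun i => S ((Equiv.swap j (Fin.last n)) i) ω < S ((Equiv.swap j (Fin.last n)) (Fin.last n)) ω)).card =
        (Finset.univ.filter (fun i => S i ω < S j ω)).card := by
      simp only [hπlast]
      apply Finset.card_bij (fun i _ => (Equiv.swap j (Fin.last n)) i)
      · intro i hi
        simp only [Finset.mem_filter] at hi ⊢
        exact ⟨Finset.mem_univ _, hi.2⟩
      · intro i _ i' _ h
        exact (Equiv.swap j (Fin.last n)).injective h
      · intro i hi
        simp only [Finset.mem_filter] at hi
        refine ⟨(Equiv.swap j (Fin.last n)).symm i, ?_, by simp⟩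
        simp only [Finset.mem_filter]
        refine ⟨Finset.mem_univ _, ?_⟩
        simpa using hi.2
    rw [hcardeq]
  have hmeasmap : ∀ π : Equiv.Perm (Fin (n+1)), Measurable (fun ω (i : Fin (n+1)) => S (π i) ω) :=
    fun π => measurable_pi_lambda _ fun i => hmeas _
  have hE_meas : ∀ j, MeasurableSet (E j) := by
    intro j
    rw [hE_pre j]
    exact hA.preimage (hmeasmap _)
  -- all E j have the same probability
  have hE_eq : ∀ j : Fin (n+1), P (E j) = P (E (Fin.last n)) := by
    intro j
    rw [hE_pre j, hE_pre (Fin.last n)]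
    have h1 : P ((fun ω i => S ((Equiv.swap j (Fin.last n)) i) ω) ⁻¹' A) =
        (Measure.map (fun ω i => S ((Equiv.swap j (Fin.last n)) i) ω) P) A := by
      rw [Measure.map_apply (hmeasmap _) hA]
    have h2 : P ((fun ω i => S ((Equiv.swap (Fin.last n) (Fin.last n)) i) ω) ⁻¹' A) =
        (Measure.map (fun ω i => S ((Equiv.swap (Fin.last n) (Fin.last n)) i) ω) P) A := by
      rw [Measure.map_apply (hmeasmap _) hA]
    rw [h1, h2, hexch, hexch]
  -- sum of probabilities is k
  have hsum : ∑ j : Fin (n+1), P (E j) = (k : ℝ≥0∞) := by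
    have h1 : ∀ j, P (E j) = ∫⁻ ω, (E j).indicator (fun _ => (1 : ℝ≥0∞)) ω ∂P := by
      intro j
      rw [lintegral_indicator (hE_meas j)]
      simp
    calc ∑ j : Fin (n+1), P (E j)
        = ∑ j : Fin (n+1), ∫⁻ ω, (E j).indicator (fun _ => (1 : ℝ≥0∞)) ω ∂P := by
          exact Finset.sum_congr rfl fun j _ => h1 j
      _ = ∫⁻ ω, ∑ j : Fin (n+1), (E j).indicator (fun _ => (1 : ℝ≥0∞)) ω ∂P := by
          rw [lintegral_finset_sum]
          intro j _
          exact (measurable_const.indicator (hE_meas j))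
      _ = ∫⁻ _, (k : ℝ≥0∞) ∂P := by
          apply lintegral_congr_ae
          filter_upwards [hdist] with ω hω
          have hfinj : Function.Injective (fun i => S i ω) := by
            intro i j h
            by_contra hne
            exact hω i j hne h
          have hcard := card_rank_le n k (fun i => S i ω) hfinj hk1 hkn
          have : ∑ j : Fin (n+1), (E j).indicator (fun _ => (1 : ℝ≥0∞)) ω =
              ((Finset.univ.filter (fun j : Fin (n+1) => ω ∈ E j)).card : ℝ≥0∞) := by
            rw [Finset.card_filter, Nat.cast_sum]
            apply Finset.sum_congr rfl
            intro j _
            rw [Set.indicator_apply]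
            by_cases hj : ω ∈ E j <;> simp [hj]
          rw [this]
          have hfe : (Finset.univ.filter (fun j : Fin (n+1) => ω ∈ E j)) =
              (Finset.univ.filter (fun j : Fin (n+1) =>
                (Finset.univ.filter (fun i => S i ω < S j ω)).card ≤ k - 1)) := by
            apply Finset.filter_congr
            intro j _
            simp [hE_def, Set.mem_setOf_eq]
          rw [hfe]
          exact_mod_cast hcard
      _ = (k : ℝ≥0∞) := by
          rw [lintegral_const]
          simp
  -- hence P (E last) = k / (n+1)
  have hconst : ∑ j : Fin (n+1), P (E j) = (n + 1 : ℝ≥0∞) * P (E (Fin.last n)) := by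
    rw [Finset.sum_congr rfl fun j _ => hE_eq j]
    simp [Finset.card_univ, mul_comm]
  have hP : (n + 1 : ℝ≥0∞) * P (E (Fin.last n)) = (k : ℝ≥0∞) := by
    rw [← hconst, hsum]
  -- the target event equals E (last)
  have hevent : {ω | S (Fin.last n) ω ≤ orderStat n (fun i => S i.castSucc ω) k} = E (Fin.last n) := by
    ext ω
    simp only [hE_def, Set.mem_setOf_eq]
    rw [le_orderStat_iff n _ k hk1 hkn]
    constructor
    · intro h
      rw [card_filter_fin_succ n (fun i => S i ω < S (Fin.last n) ω) (lt_irrefl _)]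
      exact h
    · intro h
      rw [card_filter_fin_succ n (fun i => S i ω < S (Fin.last n) ω) (lt_irrefl _)] at h
      exact h
  rw [hevent]
  -- final arithmetic
  have hne0 : (n + 1 : ℝ≥0∞) ≠ 0 := by simp
  have hnetop : (n + 1 : ℝ≥0∞) ≠ ⊤ := by
    simp [ENNReal.add_ne_top]
  have hPval : P (E (Fin.last n)) = (k : ℝ≥0∞) / (n + 1 : ℝ≥0∞) := by
    rw [ENNReal.eq_div_iff hne0 hnetop]
    exact hP
  rw [hPval]
  rw [ENNReal.le_div_iff_mul_le (Or.inl hne0) (Or.inl hnetop)]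
  have hcast : ENNReal.ofReal (1 - δ) * (n + 1 : ℝ≥0∞) = ENNReal.ofReal ((1 - δ) * (n + 1)) := by
    rw [ENNReal.ofReal_mul (by linarith)]
    congr 1
    rw [ENNReal.ofReal_add (Nat.cast_nonneg n) zero_le_one, ENNReal.ofReal_natCast,
      ENNReal.ofReal_one]
  rw [hcast]
  have hle : (1 - δ) * (n + 1 : ℝ) ≤ (k : ℝ) := by
    rw [hk]
    exact_mod_cast Nat.le_ceil _
  calc ENNReal.ofReal ((1 - δ) * (n + 1)) ≤ ENNReal.ofReal (k : ℝ) := ENNReal.ofReal_le_ofReal hle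
    _ = (k : ℝ≥0∞) := ENNReal.ofReal_natCast k
end

section
/- Let S_1, ..., S_{n+1} be exchangeable, almost surely distinct random variables, and let S_{(k)} be the k-th order statistic of S_1, ..., S_n for some k ∈ {1, ..., n}. Then P(S_{n+1} ≤ S_{(k)}) = k/(n+1). -/
open MeasureTheory
open scoped ENNReal

open Finset in
lemma sorted_getElem_lt_iff (t : ℝ) : ∀ (l : List ℝ), l.Pairwise (· ≤ ·) →
    ∀ j (hj : j < l.length), (l[j] < t ↔ j < l.countP (fun x => decide (x < t))) := by
  intro l
  induction l with
  | nil => intro _ j hj; simp at hj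
  | cons a l ih =>
    intro hs j hj
    have hs' := (List.pairwise_cons.mp hs)
    by_cases ha : a < t
    · cases j with
      | zero => simp [List.countP_cons, ha]
      | succ j =>
        have := ih hs'.2 j (by simpa using hj)
        simp only [List.getElem_cons_succ, List.countP_cons, ha]
        simp [this]
    · have hz : l.countP (fun x => decide (x < t)) = 0 := by
        rw [List.countP_eq_zero]
        intro x hx
        simp only [decide_eq_true_eq]
        exact not_lt.mpr (le_trans (not_lt.mp ha) (hs'.1 x hx))
      cases j with
      | zero => simp [List.countP_cons, ha, hz]
      | succ j =>
        have := ih hs'.2 j (by simpa using hj)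
        simp only [List.getElem_cons_succ, List.countP_cons, ha]
        simp [this, hz]

open Finset in
lemma countP_ofFn {n : ℕ} (f : Fin n → ℝ) (p : ℝ → Prop) [DecidablePred p] :
    (List.ofFn f).countP (fun x => decide (p x)) = (univ.filter fun i => p (f i)).card := by
  rw [List.ofFn_eq_map, List.countP_map, List.countP_eq_length_filter, Fin.univ_def]
  simp [Finset.card, Finset.filter, Multiset.filter_coe]
  rfl

open Finset in
lemma card_rank_le_s2 {m k : ℕ} (hk : k ≤ m) (x : Fin m → ℝ) (hinj : Function.Injective x) :
    (univ.filter fun i => (univ.filter fun j => x j ≤ x i).card ≤ k).card = k := by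
  set r : Fin m → ℕ := fun i => (univ.filter fun j => x j ≤ x i).card with hr
  have hmono : ∀ i i', x i < x i' → r i < r i' := by
    intro i i' hlt
    apply Finset.card_lt_card
    refine (Finset.ssubset_iff_of_subset ?_).mpr ⟨i', ?_, ?_⟩
    · intro j hj; simp only [Finset.mem_filter] at hj ⊢; exact ⟨hj.1, hj.2.trans hlt.le⟩
    · simp
    · simp [not_le.mpr hlt]
  have hinj' : Function.Injective r := by
    intro a b h
    by_contra hne
    rcases (Ne.lt_or_gt (hinj.ne hne)) with hl | hl
    · exact absurd h (hmono a b hl).ne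
    · exact absurd h.symm (hmono b a hl).ne
  have himg : univ.image r = Finset.Icc 1 m := by
    apply Finset.eq_of_subset_of_card_le
    · intro y hy
      obtain ⟨i, -, rfl⟩ := Finset.mem_image.mp hy
      rw [Finset.mem_Icc]
      exact ⟨Finset.card_pos.mpr ⟨i, by simp⟩, (Finset.card_filter_le _ _).trans (by simp)⟩
    · rw [Finset.card_image_of_injective _ hinj', Nat.card_Icc]
      simp
  calc (univ.filter fun i => r i ≤ k).card
      = ((univ.filter fun i => r i ≤ k).image r).card :=
        (Finset.card_image_of_injective _ hinj').symm
    _ = ((univ.image r).filter (· ≤ k)).card := by rw [Finset.filter_image]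
    _ = (Finset.Icc 1 k).card := by
        rw [himg]
        congr 1
        ext a
        simp only [Finset.mem_filter, Finset.mem_Icc]
        omega
    _ = k := by rw [Nat.card_Icc]; omega

open Finset in
lemma card_filter_comp_perm {m : ℕ} (π : Equiv.Perm (Fin m)) (p : Fin m → Prop)
    [DecidablePred p] :
    (univ.filter fun j => p (π j)).card = (univ.filter fun j => p j).card := by
  rw [← Finset.card_image_of_injective (univ.filter fun j => p (π j)) π.injective,
    ← Finset.filter_image, Finset.image_univ_equiv]

open Finset in
lemma orderStat_le_iff {n k : ℕ} (hk1 : 1 ≤ k) (hkn : k ≤ n) (f : Fin n → ℝ) (t : ℝ) :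
    t ≤ orderStat n f k ↔ (univ.filter fun i => f i < t).card < k := by
  set l := Multiset.sort (↑(List.ofFn f) : Multiset ℝ) (· ≤ ·) with hl
  have hsort : l.Pairwise (· ≤ ·) := Multiset.pairwise_sort _ _
  have hlen : l.length = n := by rw [hl, Multiset.length_sort]; simp
  have hcount : l.countP (fun x => decide (x < t)) = (univ.filter fun i => f i < t).card := by
    rw [← countP_ofFn f (· < t)]
    have h2 : (↑l : Multiset ℝ) = ↑(List.ofFn f) := Multiset.sort_eq _ _
    have := congrArg (Multiset.countP (fun x => decide (x < t))) h2
    simpa using this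
  have hk' : k - 1 < l.length := by omega
  have hgd : orderStat n f k = l[k-1] := List.getD_eq_getElem l 0 hk'
  rw [hgd, ← not_lt, sorted_getElem_lt_iff t l hsort (k-1) hk', hcount]
  omega

open Finset in
/-- For exchangeable, almost surely distinct random variables
`S₁, ..., S_{n+1}` and `k ∈ {1, ..., n}`, with `S_{(k)}` the `k`-th order statistic of
`S₁, ..., S_n`, one has `P(S_{n+1} ≤ S_{(k)}) = k/(n+1)`. -/
theorem stmt_2 {Ω : Type*} [MeasurableSpace Ω] (P : Measure Ω) [IsProbabilityMeasure P]
    (n : ℕ) (S : Fin (n + 1) → Ω → ℝ) (hmeas : ∀ i, Measurable (S i))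
    (hexch : ∀ π : Equiv.Perm (Fin (n + 1)),
      Measure.map (fun ω i => S (π i) ω) P = Measure.map (fun ω i => S i ω) P)
    (hdist : ∀ᵐ ω ∂P, ∀ i j : Fin (n + 1), i ≠ j → S i ω ≠ S j ω)
    (k : ℕ) (hk1 : 1 ≤ k) (hkn : k ≤ n) :
    P {ω | S (Fin.last n) ω ≤ orderStat n (fun i => S i.castSucc ω) k} =
      (k : ℝ≥0∞) / (n + 1) := by
  classical
  set Φ : Ω → (Fin (n+1) → ℝ) := fun ω i => S i ω with hΦdef
  have hΦ : Measurable Φ := measurable_pi_lambda _ hmeas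
  set B : Fin (n+1) → Set (Fin (n+1) → ℝ) :=
    fun i => {x | (univ.filter fun j => x j ≤ x i).card ≤ k} with hBdef
  have hrankmeas : ∀ i, Measurable fun x : Fin (n+1) → ℝ =>
      (univ.filter fun j => x j ≤ x i).card := by
    intro i
    simp only [Finset.card_filter]
    exact Finset.measurable_sum _ fun j _ =>
      Measurable.ite (measurableSet_le (measurable_pi_apply j) (measurable_pi_apply i))
        measurable_const measurable_const
  have hB : ∀ i, MeasurableSet (B i) := fun i =>
    (hrankmeas i) (show MeasurableSet (Set.Iic k) from trivial)
  set A : Fin (n+1) → Set Ω := fun i => Φ ⁻¹' B i with hAdef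
  have hA : ∀ i, MeasurableSet (A i) := fun i => hΦ (hB i)
  have hcomp : ∀ π : Equiv.Perm (Fin (n+1)), Measurable fun x : Fin (n+1) → ℝ => x ∘ π :=
    fun π => measurable_pi_lambda _ fun j => measurable_pi_apply (π j)
  have hswap : ∀ i, P (A i) = P (A (Fin.last n)) := by
    intro i
    set π := Equiv.swap (Fin.last n) i with hπ
    have hπlast : π (Fin.last n) = i := Equiv.swap_apply_left _ _
    have hpre : (fun x : Fin (n+1) → ℝ => x ∘ π) ⁻¹' (B (Fin.last n)) = B i := by
      ext x
      simp only [Set.mem_preimage, hBdef, Set.mem_setOf_eq, Function.comp]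
      rw [card_filter_comp_perm π (fun j => x j ≤ x (π (Fin.last n))), hπlast]
    have h2 : (P.map Φ).map (fun x => x ∘ π) = P.map Φ := by
      rw [Measure.map_map (hcomp π) hΦ]
      exact hexch π
    calc P (A i) = (P.map Φ) (B i) := (Measure.map_apply hΦ (hB i)).symm
      _ = (P.map Φ) ((fun x => x ∘ π) ⁻¹' (B (Fin.last n))) := by rw [hpre]
      _ = ((P.map Φ).map (fun x => x ∘ π)) (B (Fin.last n)) :=
          (Measure.map_apply (hcomp π) (hB _)).symm
      _ = (P.map Φ) (B (Fin.last n)) := by rw [h2]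
      _ = P (A (Fin.last n)) := Measure.map_apply hΦ (hB _)
  have hsum : ∑ i : Fin (n+1), P (A i) = (k : ℝ≥0∞) := by
    have heq : ∀ i, P (A i) = ∫⁻ ω, (A i).indicator 1 ω ∂P := fun i =>
      (lintegral_indicator_one (hA i)).symm
    rw [Finset.sum_congr rfl (fun i _ => heq i),
      ← lintegral_finset_sum _ (fun i _ => measurable_one.indicator (hA i))]
    have hae : ∀ᵐ ω ∂P, (∑ i : Fin (n+1), (A i).indicator (1 : Ω → ℝ≥0∞) ω) = (k : ℝ≥0∞) := by
      filter_upwards [hdist] with ω hω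
      have hinj : Function.Injective (fun j => S j ω) := by
        intro a b hab
        by_contra hne
        exact hω a b hne hab
      have hcard := card_rank_le_s2 (m := n+1) (k := k) (by omega) _ hinj
      calc ∑ i, (A i).indicator (1 : Ω → ℝ≥0∞) ω
          = ∑ i, if ω ∈ A i then (1:ℝ≥0∞) else 0 := by
            simp [Set.indicator_apply]
        _ = ((univ.filter fun i => ω ∈ A i).card : ℝ≥0∞) := by
            rw [Finset.sum_boole]
        _ = (k : ℝ≥0∞) := by
            norm_cast
            rw [show (univ.filter fun i => ω ∈ A i)
                = (univ.filter fun i => (univ.filter fun j => S j ω ≤ S i ω).card ≤ k) from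
              Finset.filter_congr fun i _ => Iff.rfl]
            exact hcard
    rw [lintegral_congr_ae hae, lintegral_const, measure_univ, mul_one]
  have hmul : ((n : ℝ≥0∞) + 1) * P (A (Fin.last n)) = (k : ℝ≥0∞) := by
    rw [← hsum, Finset.sum_congr rfl (fun i _ => hswap i), Finset.sum_const, Finset.card_univ,
      Fintype.card_fin, nsmul_eq_mul]
    push_cast
    ring
  have hfin : P (A (Fin.last n)) = (k : ℝ≥0∞) / ((n : ℝ≥0∞) + 1) := by
    rw [ENNReal.eq_div_iff (by intro h; rw [add_eq_zero] at h; exact one_ne_zero h.2) (by finiteness)]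
    exact hmul
  refine Eq.trans (measure_congr ?_) hfin
  rw [Filter.eventuallyEq_set]
  filter_upwards [hdist] with ω hω
  set t := S (Fin.last n) ω with ht
  set f : Fin n → ℝ := fun i => S i.castSucc ω with hf
  have hmemA : ω ∈ A (Fin.last n) ↔ (univ.filter fun j => S j ω ≤ t).card ≤ k := Iff.rfl
  have hstep : (univ.filter fun j : Fin (n+1) => S j ω ≤ t).card
      = (univ.filter fun i : Fin n => f i ≤ t).card + 1 := by
    rw [Finset.card_filter, Fin.sum_univ_castSucc, Finset.card_filter]
    simp [hf, ht]
  have hflt : (univ.filter fun i : Fin n => f i ≤ t) = (univ.filter fun i : Fin n => f i < t) := by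
    apply Finset.filter_congr
    intro i _
    have hne : f i ≠ t := hω i.castSucc (Fin.last n) (Fin.castSucc_lt_last i).ne
    exact ⟨fun h => h.lt_of_ne hne, le_of_lt⟩
  simp only [Set.mem_setOf_eq, hmemA, hstep, hflt]
  rw [orderStat_le_iff hk1 hkn f t]
  omega
end
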